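/- Let E be a field of characteristic different from 2 and let v be a henselian ℤ-valuation on E with v(2) = 0. Then for all units u₁, u₂ of the valuation ring O_v, the binary quadratic form ⟨u₁, u₂⟩ over E is isotropic if and only if the residue of u₁u₂ in the residue field κ_v lies in −κ_v², i.e. −(residue of u₁u₂) is a square in κ_v. -/

import Mathlib

/-!
Conventions used throughout this file.

* `ℤ`-valuations.  We use valuations with values in the multiplicative value group
  `Zm0 := WithZero (Multiplicative ℤ)` (Mathlib's `ℤₘ₀`).  The *additive* value `n : ℤ`
  of the paper corresponds to the multiplicative value `ofAdd (-n)`, so additive value `0`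
  corresponds to `(1 : Zm0)`, the valuation ring of `v` is `{x | v x ≤ 1}`, and
  additive inequalities get reversed.  A `ℤ`-valuation (a valuation with value group `ℤ`)
  is a `v : Valuation K Zm0` that is surjective.

* The valuation ring of `v` is `v.valuationSubring`, and the residue field `κ_v` is
  `IsLocalRing.ResidueField v.valuationSubring`.
-/

open Multiplicative

local notation "Zm0" => WithZero (Multiplicative ℤ)

universe u

/-- A valuation `val` on a field `E` is *henselian* if it extends uniquely to every finite
field extension `L` of `E`.  Extensions of `val` to `L` (up to equivalence) correspond
exactly to valuation subrings of `L` whose pullback to `E` is the valuation subring of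
`val`, so uniqueness of the extension is expressed by `∃!` below. -/
def IsHenselianValuation {E : Type u} [Field E] {Γ : Type*}
    [LinearOrderedCommGroupWithZero Γ] (val : Valuation E Γ) : Prop :=
  ∀ (L : Type u) [Field L] [Algebra E L] [FiniteDimensional E L],
    ∃! O : ValuationSubring L, O.comap (algebraMap E L) = val.valuationSubring

lemma aux_inv_not_mem_add {L : Type*} [Field L] (O : ValuationSubring L) {x y : L}
    (hxy : x + y ≠ 0) (hx : x⁻¹ ∉ O) (hy : y⁻¹ ∉ O) : (x + y)⁻¹ ∉ O := by
  have hx0 : x ≠ 0 := by rintro rfl; simp only [inv_zero] at hx; exact hx (zero_mem O)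
  have hy0 : y ≠ 0 := by rintro rfl; simp only [inv_zero] at hy; exact hy (zero_mem O)
  rcases O.mem_or_inv_mem (x / y) with h | h
  · intro hs
    apply hy
    have hid : y⁻¹ = (x / y + 1) * (x + y)⁻¹ := by
      field_simp
    rw [hid]
    exact mul_mem (add_mem h (one_mem O)) hs
  · intro hs
    apply hx
    rw [inv_div] at h
    have hid : x⁻¹ = (y / x + 1) * (x + y)⁻¹ := by
      field_simp
      ring
    rw [hid]
    exact mul_mem (add_mem h (one_mem O)) hs

lemma aux_mul_self_eq_one {g : Zm0} (h : g * g = 1) : g = 1 := by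
  have hg0 : g ≠ 0 := by rintro rfl; simp at h
  obtain ⟨u, rfl⟩ := WithZero.ne_zero_iff_exists.mp hg0
  have hu : u * u = 1 := by exact_mod_cast h
  have : Multiplicative.toAdd u + Multiplicative.toAdd u = 0 := by
    rw [← toAdd_mul, hu, toAdd_one]
  have : Multiplicative.toAdd u = 0 := by omega
  have : u = 1 := by
    rw [← toAdd_one] at this
    exact Multiplicative.toAdd.injective (by simpa using this)
  rw [this]; rfl

/-- Let `E` be a field of characteristic `≠ 2` and `v` a henselian
`ℤ`-valuation on `E` with `v 2 = 0` (multiplicatively, `v 2 = 1`).  For units `u₁, u₂` of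
the valuation ring (i.e. elements of value `0`, multiplicatively of value `1`), the binary
form `⟨u₁, u₂⟩` is isotropic over `E` iff `-(residue of u₁ * u₂)` is a square in `κ_v`. -/
theorem statement0 {E : Type u} [Field E] (hchar : ringChar E ≠ 2)
    (v : Valuation E Zm0) (hZ : Function.Surjective v)
    (hhens : IsHenselianValuation v) (h2 : v 2 = 1)
    (u₁ u₂ : E) (hu₁ : v u₁ = 1) (hu₂ : v u₂ = 1) :
    (∃ y : Fin 2 → E, y ≠ 0 ∧ u₁ * y 0 ^ 2 + u₂ * y 1 ^ 2 = 0) ↔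
      IsSquare (-(IsLocalRing.residue v.valuationSubring
        (⟨u₁ * u₂, by
          rw [Valuation.mem_valuationSubring_iff, map_mul, hu₁, hu₂, mul_one]⟩ :
            v.valuationSubring))) := by
  have hu₁0 : u₁ ≠ 0 := v.ne_zero_iff.mp (by rw [hu₁]; exact one_ne_zero)
  have hu₂0 : u₂ ≠ 0 := v.ne_zero_iff.mp (by rw [hu₂]; exact one_ne_zero)
  have h2ne : (2 : E) ≠ 0 := v.ne_zero_iff.mp (by rw [h2]; exact one_ne_zero)
  set a : E := -(u₁ * u₂) with ha
  have hva : v a = 1 := by rw [ha, Valuation.map_neg, map_mul, hu₁, hu₂, mul_one]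
  have ha0 : a ≠ 0 := v.ne_zero_iff.mp (by rw [hva]; exact one_ne_zero)
  have hU : u₁ * u₂ ∈ v.valuationSubring := by
    rw [Valuation.mem_valuationSubring_iff, map_mul, hu₁, hu₂, mul_one]
  set U : v.valuationSubring := ⟨u₁ * u₂, hU⟩ with hUdef
  -- the residue of `U` is nonzero
  have hUunit : IsUnit U := by
    refine isUnit_iff_exists_inv.mpr ⟨⟨(u₁ * u₂)⁻¹, ?_⟩, ?_⟩
    · rw [Valuation.mem_valuationSubring_iff, map_inv₀, map_mul, hu₁, hu₂, mul_one, inv_one]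
    · exact Subtype.ext (mul_inv_cancel₀ (mul_ne_zero hu₁0 hu₂0))
  have hresU : IsLocalRing.residue v.valuationSubring U ≠ 0 :=
    (hUunit.map (IsLocalRing.residue v.valuationSubring)).ne_zero
  -- membership in the maximal ideal in terms of the valuation
  have hmax : ∀ x : v.valuationSubring, x ∈ IsLocalRing.maximalIdeal v.valuationSubring ↔ v (x : E) < 1 := by
    intro x
    constructor
    · intro hx
      refine lt_of_le_of_ne x.2 ?_
      intro hx1
      have hx0 : (x : E) ≠ 0 := v.ne_zero_iff.mp (by rw [hx1]; exact one_ne_zero)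
      have : IsUnit x := by
        refine isUnit_iff_exists_inv.mpr ⟨⟨(x : E)⁻¹, ?_⟩, Subtype.ext (mul_inv_cancel₀ hx0)⟩
        rw [Valuation.mem_valuationSubring_iff, map_inv₀, hx1, inv_one]
      exact (IsLocalRing.mem_maximalIdeal x).mp hx (this)
    · intro hx
      rw [IsLocalRing.mem_maximalIdeal, mem_nonunits_iff]
      intro hxu
      obtain ⟨w, hw⟩ := isUnit_iff_exists_inv.mp hxu
      have hw' : (x : E) * (w : E) = 1 := by exact_mod_cast congrArg (Subtype.val) hw
      have : (1 : Zm0) ≤ v (x : E) := by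
        calc (1 : Zm0) = v ((x : E) * (w : E)) := by rw [hw', map_one]
        _ = v (x : E) * v (w : E) := map_mul v _ _
        _ ≤ v (x : E) * 1 := mul_le_mul_right w.2 _
        _ = v (x : E) := mul_one _
      exact absurd hx (not_lt.mpr this)
  -- units of `A` have valuation one
  have hunitval : ∀ x : v.valuationSubring, IsUnit x → v (x : E) = 1 := by
    intro x hx
    refine le_antisymm x.2 ?_
    obtain ⟨w, hw⟩ := isUnit_iff_exists_inv.mp hx
    have hw' : (x : E) * (w : E) = 1 := by exact_mod_cast congrArg (Subtype.val) hw
    calc (1 : Zm0) = v (x : E) * v (w : E) := by rw [← map_mul, hw', map_one]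
    _ ≤ v (x : E) * 1 := mul_le_mul_right w.2 _
    _ = v (x : E) := mul_one _
  constructor
  · -- isotropic → square in residue field
    rintro ⟨y, hy, hsum⟩
    have hy0 : y 0 ≠ 0 := by
      intro h0
      have hy1 : y 1 = 0 := by
        have : u₂ * y 1 ^ 2 = 0 := by rw [h0] at hsum; simpa using hsum
        rcases mul_eq_zero.mp this with h | h
        · exact absurd h hu₂0
        · exact pow_eq_zero_iff (by norm_num : (2:ℕ) ≠ 0) |>.mp h
      apply hy
      funext i
      fin_cases i <;> simp [h0, hy1]
    set t : E := u₂ * y 1 / y 0 with htdef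
    have ht : t * t = a := by
      rw [htdef, ha, div_mul_div_comm, div_eq_iff (mul_ne_zero hy0 hy0)]
      linear_combination u₂ * hsum
    have hvt : v t = 1 := by
      have h1 : v t * v t = 1 := by rw [← map_mul, ht, hva]
      exact aux_mul_self_eq_one h1
    have htA : t ∈ v.valuationSubring := by rw [Valuation.mem_valuationSubring_iff, hvt]
    refine ⟨IsLocalRing.residue v.valuationSubring ⟨t, htA⟩, ?_⟩
    rw [← map_neg, ← map_mul]
    congr 1
    refine Subtype.ext ?_
    show -(u₁ * u₂) = t * t
    rw [ht, ha]
  · -- square in residue field → isotropic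
    intro hsq
    have key : ∃ t : E, t * t = a := by
      by_contra hns
      push_neg at hns
      obtain ⟨d, hd⟩ := hsq
      have hd' : -(IsLocalRing.residue v.valuationSubring U) = d * d := hd
      have hd0 : d ≠ 0 := by
        rintro rfl
        rw [mul_zero, neg_eq_zero] at hd'
        exact hresU hd'
      obtain ⟨c, hc⟩ := IsLocalRing.residue_surjective (R := v.valuationSubring) d
      have hcunit : IsUnit c := by
        rw [← IsLocalRing.notMem_maximalIdeal]
        intro hcm
        exact hd0 (by rw [← hc, IsLocalRing.residue_eq_zero_iff]; exact hcm)
      have hvc : v (c : E) = 1 := hunitval c hcunit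
      have hc0 : (c : E) ≠ 0 := v.ne_zero_iff.mp (by rw [hvc]; exact one_ne_zero)
      set cE : E := (c : E) with hcE
      have hsubmem : c * c + U ∈ IsLocalRing.maximalIdeal v.valuationSubring := by
        rw [← IsLocalRing.residue_eq_zero_iff, map_add, map_mul, hc]
        rw [← hd']
        ring
      have hvsub : v (cE * cE + u₁ * u₂) < 1 := by
        have h := (hmax _).mp hsubmem
        exact h
      set e : E := a - cE * cE with he
      have hve : v e < 1 := by
        have : e = -(cE * cE + u₁ * u₂) := by rw [he, ha]; ring
        rw [this, Valuation.map_neg]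
        exact hvsub
      have he0 : e ≠ 0 := by
        intro h0
        rw [he] at h0
        exact hns cE (sub_eq_zero.mp h0).symm
      -- build the quadratic extension
      have hirr : Irreducible (Polynomial.X ^ 2 - Polynomial.C a) := by
        refine X_pow_sub_C_irreducible_of_prime Nat.prime_two ?_
        intro b hb
        exact hns b (by rw [← sq]; exact hb)
      haveI : Fact (Irreducible (Polynomial.X ^ 2 - Polynomial.C a)) := ⟨hirr⟩
      set L := AdjoinRoot (Polynomial.X ^ 2 - Polynomial.C a) with hL
      have hmonic : (Polynomial.X ^ 2 - Polynomial.C a).Monic :=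
        Polynomial.monic_X_pow_sub_C a (by norm_num)
      haveI : FiniteDimensional E L := (AdjoinRoot.powerBasis hmonic.ne_zero).finite
      obtain ⟨O, hO, huniq⟩ := hhens L
      set r : L := AdjoinRoot.root _ with hr
      have hr2 : r ^ 2 = algebraMap E L a := by
        have h0 := AdjoinRoot.eval₂_root (Polynomial.X ^ 2 - Polynomial.C a)
        rw [Polynomial.eval₂_sub, Polynomial.eval₂_pow, Polynomial.eval₂_X,
          Polynomial.eval₂_C, sub_eq_zero] at h0
        rw [AdjoinRoot.algebraMap_eq]
        exact h0
      have haL0 : algebraMap E L a ≠ 0 := by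
        simpa using (map_ne_zero (algebraMap E L)).mpr ha0
      have hr0 : r ≠ 0 := by
        intro h0
        rw [h0] at hr2
        simp at hr2
        exact haL0 hr2.symm
      -- the conjugation automorphism
      have haev : Polynomial.aeval (-r) (Polynomial.X ^ 2 - Polynomial.C a) = 0 := by
        rw [map_sub, map_pow, Polynomial.aeval_X, Polynomial.aeval_C, neg_sq, hr2, sub_self]
      set σ : L →ₐ[E] L := AdjoinRoot.liftAlgHom _ (Algebra.ofId E L) (-r) haev with hσ
      have hσr : σ r = -r :=
        AdjoinRoot.liftAlgHom_root (x := -r) (h := haev)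
      have hO' : O.comap σ.toRingHom = O := by
        refine huniq _ ?_
        show (O.comap σ.toRingHom).comap (algebraMap E L) = v.valuationSubring
        rw [ValuationSubring.comap_comap, ← hO]
        congr 1
        exact σ.comp_algebraMap
      have hmemσ : ∀ x : L, σ x ∈ O ↔ x ∈ O := by
        intro x
        conv_rhs => rw [← hO']
        exact (ValuationSubring.mem_comap).symm
      have hE : ∀ w : E, algebraMap E L w ∈ O ↔ v w ≤ 1 := by
        intro w
        rw [← Valuation.mem_valuationSubring_iff, ← hO, ValuationSubring.mem_comap]
      -- the elements p and q
      set cL : L := algebraMap E L cE with hcL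
      set p : L := r - cL with hp
      set q : L := r + cL with hq
      have hrO : r ∈ O := by
        rcases O.mem_or_inv_mem r with h | h
        · exact h
        · have hid : r = algebraMap E L a * r⁻¹ := by
            rw [← hr2, sq r, mul_inv_cancel_right₀ hr0]
          rw [hid]
          exact mul_mem ((hE a).mpr hva.le) h
      have hcLO : cL ∈ O := (hE cE).mpr hvc.le
      have hpO : p ∈ O := sub_mem hrO hcLO
      have hqO : q ∈ O := add_mem hrO hcLO
      have hprod : p * q = algebraMap E L e := by
        have h1 : p * q = r ^ 2 - cL * cL := by rw [hp, hq]; ring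
        rw [h1, hr2, he, map_sub, map_mul]
      have hprodinv : (p * q)⁻¹ ∉ O := by
        rw [hprod, ← map_inv₀]
        intro h
        rw [hE] at h
        rw [Valuation.map_inv] at h
        have h1 : v e ≠ 0 := v.ne_zero_iff.mpr he0
        have : (1 : Zm0) ≤ v e := by
          calc (1 : Zm0) = v e * (v e)⁻¹ := (mul_inv_cancel₀ h1).symm
          _ ≤ v e * 1 := mul_le_mul_right h _
          _ = v e := mul_one _
        exact absurd hve (not_lt.mpr this)
      have hor : p⁻¹ ∉ O ∨ q⁻¹ ∉ O := by
        by_contra h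
        push_neg at h
        apply hprodinv
        rw [mul_inv]
        exact mul_mem h.1 h.2
      have hσq : σ q = -p := by
        rw [hq, hp, map_add, hσr, hcL, σ.commutes]
        ring
      have hσp : σ p = -q := by
        rw [hq, hp, map_sub, hσr, hcL, σ.commutes]
        ring
      have hboth : p⁻¹ ∉ O ∧ q⁻¹ ∉ O := by
        rcases hor with h | h
        · refine ⟨h, fun hqi => h ?_⟩
          have : σ q⁻¹ ∈ O := (hmemσ _).mpr hqi
          rw [map_inv₀, hσq, inv_neg] at this
          simpa using neg_mem this
        · refine ⟨fun hpi => h ?_, h⟩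
          have : σ p⁻¹ ∈ O := (hmemσ _).mpr hpi
          rw [map_inv₀, hσp, inv_neg] at this
          simpa using neg_mem this
      have hsum2 : q + -p = algebraMap E L (2 * cE) := by
        rw [hq, hp, map_mul, map_ofNat, hcL]
        ring
      have h2c0 : q + -p ≠ 0 := by
        rw [hsum2]
        exact (map_ne_zero (algebraMap E L)).mpr (mul_ne_zero h2ne hc0)
      have hnotmem := aux_inv_not_mem_add O h2c0 hboth.2 (by
        rw [inv_neg]
        intro hcontra
        exact hboth.1 (by simpa using neg_mem hcontra))
      apply hnotmem
      rw [hsum2, ← map_inv₀]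
      refine (hE _).mpr ?_
      rw [Valuation.map_inv, map_mul, h2, hvc, mul_one, inv_one]
    obtain ⟨t, ht⟩ := key
    refine ⟨![t, u₁], ?_, ?_⟩
    · intro h
      apply hu₁0
      have := congrFun h 1
      simpa using this
    · simp only [Matrix.cons_val_zero, Matrix.cons_val_one, Matrix.head_cons]
      linear_combination u₁ * ht
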